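/- arXiv:math/0303008 — 2 statements merged into one kernel-verified Lean document; each statement's English description precedes it below -/
import Mathlib

section
/- Let X be a normed linear space, J : X → ℝ ∪ {+∞} a lower semicontinuous functional with J(0) < +∞, I : X → ℝ a functional of class C¹, and f = J + I. Assume J and I are even. Then for every η ≥ f(0) one has |d_{ℤ₂}G_f|(0,η) = 1 if and only if |d_{ℤ₂}G_J|(0, η − I(0)) = 1. -/
open Metric Set Filter
open scoped ENNReal

/-- The epigraph of `f : X → ℝ ∪ {+∞}`, as a subset of `X × ℝ`. -/
def epiSet {X : Type*} [MetricSpace X] (f : X → EReal) : Set (X × ℝ) :=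
  {p | f p.1 ≤ (p.2 : EReal)}

/-- The metric on `X × ℝ`, `d((u,η),(v,μ)) = (d(u,v)² + (η−μ)²)^{1/2}`. -/
noncomputable def distE {X : Type*} [MetricSpace X] (p q : X × ℝ) : ℝ :=
  Real.sqrt (dist p.1 q.1 ^ 2 + (p.2 - q.2) ^ 2)

/-- The open ball in `X × ℝ` with respect to `distE`. -/
def ballE {X : Type*} [MetricSpace X] (p : X × ℝ) (δ : ℝ) : Set (X × ℝ) :=
  {q | distE q p < δ}

/-- The set of admissible `σ` in the definition of the weak slope `|d G_f|(u, η)`. -/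
def slopeSet {X : Type*} [MetricSpace X] (f : X → EReal) (u : X) (η : ℝ) : Set ℝ :=
  {σ | 0 ≤ σ ∧ ∃ δ : ℝ, 0 < δ ∧ ∃ H : X × ℝ → ℝ → X × ℝ,
    ContinuousOn (fun q : (X × ℝ) × ℝ => H q.1 q.2)
      ((ballE (u, η) δ ∩ epiSet f) ×ˢ Icc 0 δ) ∧
    ∀ p ∈ ballE (u, η) δ ∩ epiSet f, ∀ t ∈ Icc (0:ℝ) δ,
      H p t ∈ epiSet f ∧ distE (H p t) p ≤ t ∧ (H p t).2 ≤ p.2 - σ * t}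

/-- The weak slope `|d G_f|(u, η)` of `G_f` at `(u, η) ∈ epi f`. -/
noncomputable def slopeG {X : Type*} [MetricSpace X] (f : X → EReal) (u : X) (η : ℝ) : ℝ :=
  sSup (slopeSet f u η)

/-- The weak slope `|df|(u)` of a lower semicontinuous `f` at `u ∈ dom f`. -/
noncomputable def wslope {X : Type*} [MetricSpace X] (f : X → EReal) (u : X) : ℝ≥0∞ :=
  if slopeG f u (f u).toReal < 1 then
    ENNReal.ofReal (slopeG f u (f u).toReal / Real.sqrt (1 - slopeG f u (f u).toReal ^ 2))
  else ⊤

/-- Admissible `σ` in the definition of the equivariant weak slope `|d_{ℤ₂} G_f|(0, η)`. -/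
def slopeZ2Set {X : Type*} [NormedAddCommGroup X] [NormedSpace ℝ X]
    (f : X → EReal) (η : ℝ) : Set ℝ :=
  {σ | 0 ≤ σ ∧ ∃ δ : ℝ, 0 < δ ∧ ∃ H : X × ℝ → ℝ → X × ℝ,
    ContinuousOn (fun q : (X × ℝ) × ℝ => H q.1 q.2)
      ((ballE ((0 : X), η) δ ∩ epiSet f) ×ˢ Icc 0 δ) ∧
    ∀ p ∈ ballE ((0 : X), η) δ ∩ epiSet f, ∀ t ∈ Icc (0:ℝ) δ,
      H p t ∈ epiSet f ∧ distE (H p t) p ≤ t ∧ (H p t).2 ≤ p.2 - σ * t ∧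
      (H (-p.1, p.2) t).1 = -(H p t).1}

/-- The equivariant weak slope `|d_{ℤ₂} G_f|(0, η)`. -/
noncomputable def slopeZ2 {X : Type*} [NormedAddCommGroup X] [NormedSpace ℝ X]
    (f : X → EReal) (η : ℝ) : ℝ :=
  sSup (slopeZ2Set f η)

/-- Condition (3.3). -/
def cond33 {X : Type*} [MetricSpace X] (f : X → EReal) : Prop :=
  ∀ (u : X) (η : ℝ), (u, η) ∈ epiSet f → f u < (η : EReal) → slopeG f u η = 1

/-- The Palais–Smale condition at level `c`. -/
def PScond {X : Type*} [MetricSpace X] (f : X → EReal) (c : ℝ) : Prop :=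
  ∀ u : ℕ → X, (∀ n, f (u n) ≠ ⊤) →
    Tendsto (fun n => wslope f (u n)) atTop (nhds 0) →
    Tendsto (fun n => f (u n)) atTop (nhds (c : EReal)) →
    ∃ (v : X) (φ : ℕ → ℕ), StrictMono φ ∧ Tendsto (fun n => u (φ n)) atTop (nhds v)

section Aux

open Metric Set Filter

variable {X : Type*} [NormedAddCommGroup X] [NormedSpace ℝ X]

lemma sqrt_le_of_sq {x t : ℝ} (ht : 0 ≤ t) (h : x ≤ t ^ 2) : Real.sqrt x ≤ t := by
  calc Real.sqrt x ≤ Real.sqrt (t ^ 2) := Real.sqrt_le_sqrt h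
    _ = t := Real.sqrt_sq ht

lemma distE_self' (p : X × ℝ) : distE p p = 0 := by simp [distE]

lemma dist_fst_le_distE (p q : X × ℝ) : dist p.1 q.1 ≤ distE p q := by
  have h := Real.sqrt_le_sqrt (show dist p.1 q.1 ^ 2 ≤ dist p.1 q.1 ^ 2 + (p.2 - q.2) ^ 2 by
    nlinarith [sq_nonneg (p.2 - q.2)])
  rwa [Real.sqrt_sq dist_nonneg] at h

lemma abs_snd_le_distE (p q : X × ℝ) : |p.2 - q.2| ≤ distE p q := by
  have h := Real.sqrt_le_sqrt (show (p.2 - q.2) ^ 2 ≤ dist p.1 q.1 ^ 2 + (p.2 - q.2) ^ 2 by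
    nlinarith [sq_nonneg (dist p.1 q.1)])
  rwa [Real.sqrt_sq_eq_abs] at h

lemma sq_add_sq_le_of_distE_le {p q : X × ℝ} {t : ℝ} (h : distE p q ≤ t) :
    dist p.1 q.1 ^ 2 + (p.2 - q.2) ^ 2 ≤ t ^ 2 := by
  have h2 := pow_le_pow_left₀ (Real.sqrt_nonneg _) h 2
  rwa [Real.sq_sqrt (by positivity)] at h2

lemma fderiv_even_zero (h : X → ℝ) (hC : ContDiff ℝ 1 h) (he : ∀ x, h (-x) = h x) :
    fderiv ℝ h 0 = 0 := by
  have hd : DifferentiableAt ℝ h 0 := (hC.differentiable one_ne_zero) 0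
  have h1 : HasFDerivAt h (fderiv ℝ h 0) ((fun x : X => -x) 0) := by simpa using hd.hasFDerivAt
  have hneg : HasFDerivAt (fun x : X => -x) (-(ContinuousLinearMap.id ℝ X)) 0 :=
    (hasFDerivAt_id (0 : X)).neg
  have h2 := h1.comp (0 : X) hneg
  have h3 : HasFDerivAt h ((fderiv ℝ h 0).comp (-(ContinuousLinearMap.id ℝ X))) 0 := by
    have heq : (h ∘ Neg.neg) = h := funext fun x => he x
    rwa [heq] at h2
  have h4 : (fderiv ℝ h 0).comp (-(ContinuousLinearMap.id ℝ X)) = fderiv ℝ h 0 := h3.fderiv.symm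
  ext x
  have e1 := congrArg (fun L : X →L[ℝ] ℝ => L x) h4
  simp only [ContinuousLinearMap.comp_apply, ContinuousLinearMap.neg_apply,
    ContinuousLinearMap.id_apply, map_neg] at e1
  simp only [ContinuousLinearMap.zero_apply]
  linarith

lemma even_lip (h : X → ℝ) (hC : ContDiff ℝ 1 h) (he : ∀ x, h (-x) = h x) {ε : ℝ} (hε : 0 < ε) :
    ∃ r > 0, ∀ x ∈ closedBall (0 : X) r, ∀ y ∈ closedBall (0 : X) r,
      |h x - h y| ≤ ε * ‖x - y‖ := by
  have hf0 : fderiv ℝ h 0 = 0 := fderiv_even_zero h hC he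
  have hcont : Continuous fun x => ‖fderiv ℝ h x‖ := (hC.continuous_fderiv one_ne_zero).norm
  have hev : ∀ᶠ x in nhds (0 : X), ‖fderiv ℝ h x‖ < ε := by
    have := hcont.continuousAt (x := (0 : X))
    rw [ContinuousAt, hf0] at this
    exact this (Iio_mem_nhds (by simpa using hε))
  obtain ⟨r, hr, hball⟩ := Metric.eventually_nhds_iff_ball.mp hev
  refine ⟨r / 2, by positivity, fun x hx y hy => ?_⟩
  have hsub : closedBall (0 : X) (r / 2) ⊆ ball (0 : X) r :=
    closedBall_subset_ball (by linarith)
  have := (convex_closedBall (0 : X) (r / 2)).norm_image_sub_le_of_norm_fderiv_le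
    (f := h) (fun z _ => (hC.differentiable one_ne_zero) z)
    (fun z hz => le_of_lt (hball z (hsub hz))) hy hx
  simpa [Real.norm_eq_abs] using this

lemma zero_mem_slopeZ2Set (f : X → EReal) (η : ℝ) : (0 : ℝ) ∈ slopeZ2Set f η := by
  refine ⟨le_rfl, 1, one_pos, fun p _ => p, continuous_fst.continuousOn, ?_⟩
  intro p hp t ht
  refine ⟨hp.2, ?_, by simp, rfl⟩
  rw [distE_self']
  exact ht.1

lemma slopeZ2Set_le_one {f : X → EReal} {η : ℝ} (h0 : f 0 ≤ (η : EReal)) :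
    ∀ σ ∈ slopeZ2Set f η, σ ≤ 1 := by
  rintro σ ⟨hσ0, δ, hδ, H, -, hH⟩
  have hp : ((0 : X), η) ∈ ballE ((0 : X), η) δ ∩ epiSet f := by
    constructor
    · show distE _ _ < δ
      rw [distE_self']; exact hδ
    · exact h0
  obtain ⟨-, hdist, hdec, -⟩ := hH _ hp δ ⟨le_of_lt hδ, le_rfl⟩
  have habs := (abs_snd_le_distE (H ((0 : X), η) δ) ((0 : X), η)).trans hdist
  rw [abs_le] at habs
  have := habs.1
  nlinarith

lemma slopeZ2_nonneg {f : X → EReal} {η : ℝ} (h0 : f 0 ≤ (η : EReal)) :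
    0 ≤ slopeZ2 f η :=
  le_csSup ⟨1, slopeZ2Set_le_one h0⟩ (zero_mem_slopeZ2Set f η)

lemma slopeZ2_le_one {f : X → EReal} {η : ℝ} (h0 : f 0 ≤ (η : EReal)) :
    slopeZ2 f η ≤ 1 :=
  csSup_le ⟨0, zero_mem_slopeZ2Set f η⟩ (slopeZ2Set_le_one h0)

set_option maxHeartbeats 1000000 in
lemma mem_transfer (g : X → EReal) (h : X → ℝ) (hC : ContDiff ℝ 1 h)
    (hhe : ∀ x, h (-x) = h x) (η : ℝ) {σ ε : ℝ} (hσ : σ ∈ slopeZ2Set g η)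
    (hε : 0 < ε) (hε1 : ε ≤ 1) (hεσ : ε ≤ σ) :
    (σ - ε) * ((1 + ε) ^ 2)⁻¹ ∈ slopeZ2Set (fun x => g x + (h x : EReal)) (η + h 0) := by
  obtain ⟨hσ0, δ₀, hδ₀, H, Hc, Hp⟩ := hσ
  obtain ⟨r, hr, hlip⟩ := even_lip h hC hhe hε
  set lam : ℝ := ((1 + ε) ^ 2)⁻¹ with hlam
  have hlampos : 0 < lam := by positivity
  have hlammul : lam * (1 + ε) ^ 2 = 1 := inv_mul_cancel₀ (by positivity)
  have hsq1 : (1 : ℝ) ≤ (1 + ε) ^ 2 := by nlinarith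
  have hlamle : lam ≤ 1 := by nlinarith
  set δ₁ : ℝ := min (δ₀ / 6) (r / 2) with hδ₁
  have hδ₁pos : 0 < δ₁ := lt_min (by linarith) (by linarith)
  have hδ₁r : δ₁ ≤ r / 2 := min_le_right _ _
  have hδ₁δ₀ : δ₁ ≤ δ₀ / 6 := min_le_left _ _
  set F : X → EReal := fun x => g x + (h x : EReal) with hFdef
  have key : ∀ p ∈ ballE ((0 : X), η + h 0) δ₁ ∩ epiSet F,
      (p.1, p.2 - h p.1) ∈ ballE ((0 : X), η) δ₀ ∩ epiSet g ∧ ‖p.1‖ < δ₁ := by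
    rintro ⟨u, μ⟩ ⟨hball, hepi⟩
    have hball' : distE (u, μ) ((0 : X), η + h 0) < δ₁ := hball
    have hu : ‖u‖ < δ₁ := by
      have h1 := (dist_fst_le_distE (u, μ) ((0 : X), η + h 0)).trans_lt hball'
      simpa [dist_zero_right] using h1
    have hμ : |μ - (η + h 0)| < δ₁ := by
      have h1 := (abs_snd_le_distE (u, μ) ((0 : X), η + h 0)).trans_lt hball'
      simpa using h1
    have hu_r : u ∈ closedBall (0 : X) r := by
      simp only [Metric.mem_closedBall, dist_zero_right]; linarith
    have h0_r : (0 : X) ∈ closedBall (0 : X) r := mem_closedBall_self (by linarith)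
    have hhu : |h u - h 0| ≤ ε * ‖u‖ := by simpa using hlip u hu_r 0 h0_r
    refine ⟨⟨?_, ?_⟩, hu⟩
    · show distE (u, μ - h u) ((0 : X), η) < δ₀
      rw [distE]
      apply (Real.sqrt_lt' hδ₀).2
      obtain ⟨m1, m2⟩ := abs_lt.mp hμ
      obtain ⟨l1, l2⟩ := abs_le.mp hhu
      have hc1 : μ - h u - η ≤ 2 * δ₁ := by nlinarith [norm_nonneg u]
      have hc2 : -(2 * δ₁) ≤ μ - h u - η := by nlinarith [norm_nonneg u]
      have hu2 : ‖u‖ ^ 2 ≤ δ₁ ^ 2 := by nlinarith [norm_nonneg u]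
      have hc2' : (μ - h u - η) ^ 2 ≤ (2 * δ₁) ^ 2 := sq_le_sq' hc2 hc1
      have hδsq : δ₁ ^ 2 ≤ (δ₀ / 6) ^ 2 := by nlinarith
      have hd : dist (u, μ - h u).1 ((0 : X), η).1 = ‖u‖ := by
        simp [dist_zero_right]
      rw [hd]
      have : (u, μ - h u).2 - ((0 : X), η).2 = μ - h u - η := rfl
      rw [this]
      nlinarith [mul_pos hδ₀ hδ₀]
    · show g u ≤ ((μ - h u : ℝ) : EReal)
      rw [EReal.coe_sub]
      exact (EReal.le_sub_iff_add_le (Or.inl (EReal.coe_ne_bot _))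
        (Or.inl (EReal.coe_ne_top _))).2 hepi
  refine ⟨mul_nonneg (by linarith) hlampos.le, δ₁, hδ₁pos,
    fun p t => ((H (p.1, p.2 - h p.1) (lam * t)).1,
      (H (p.1, p.2 - h p.1) (lam * t)).2 + h (H (p.1, p.2 - h p.1) (lam * t)).1), ?_, ?_⟩
  · -- continuity
    have hΦ : Continuous (fun z : (X × ℝ) × ℝ =>
        (((z.1.1, z.1.2 - h z.1.1) : X × ℝ), lam * z.2)) := by
      have hc := hC.continuous
      fun_prop
    have hmaps : MapsTo (fun z : (X × ℝ) × ℝ => (((z.1.1, z.1.2 - h z.1.1) : X × ℝ), lam * z.2))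
        ((ballE ((0 : X), η + h 0) δ₁ ∩ epiSet F) ×ˢ Icc 0 δ₁)
        ((ballE ((0 : X), η) δ₀ ∩ epiSet g) ×ˢ Icc 0 δ₀) := by
      rintro ⟨p, t⟩ ⟨hp, ht⟩
      refine ⟨(key p hp).1, mul_nonneg hlampos.le ht.1, ?_⟩
      calc lam * t ≤ 1 * δ₁ := mul_le_mul hlamle ht.2 ht.1 zero_le_one
        _ ≤ δ₀ := by rw [one_mul]; linarith
    have hW : ContinuousOn (fun z : (X × ℝ) × ℝ =>
        H (z.1.1, z.1.2 - h z.1.1) (lam * z.2))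
        ((ballE ((0 : X), η + h 0) δ₁ ∩ epiSet F) ×ˢ Icc 0 δ₁) :=
      Hc.comp hΦ.continuousOn hmaps
    have hW1 := continuous_fst.comp_continuousOn hW
    have hW2 := continuous_snd.comp_continuousOn hW
    exact hW1.prodMk (hW2.add (hC.continuous.comp_continuousOn hW1))
  · rintro p hp t ht
    obtain ⟨hq, hu⟩ := key p hp
    have hlamt : lam * t ∈ Icc (0 : ℝ) δ₀ := by
      refine ⟨mul_nonneg hlampos.le ht.1, ?_⟩
      calc lam * t ≤ 1 * δ₁ := mul_le_mul hlamle ht.2 ht.1 zero_le_one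
        _ ≤ δ₀ := by rw [one_mul]; linarith
    obtain ⟨hepiw, hdistw, hdecw, heqw⟩ := Hp _ hq _ hlamt
    set w := H (p.1, p.2 - h p.1) (lam * t) with hw
    have ha : dist w.1 p.1 ≤ lam * t := by
      have h1 := (dist_fst_le_distE w (p.1, p.2 - h p.1)).trans hdistw
      simpa using h1
    have hb : |w.2 - (p.2 - h p.1)| ≤ lam * t := by
      have h1 := (abs_snd_le_distE w (p.1, p.2 - h p.1)).trans hdistw
      simpa using h1
    have hab : dist w.1 p.1 ^ 2 + (w.2 - (p.2 - h p.1)) ^ 2 ≤ (lam * t) ^ 2 := by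
      have h1 := sq_add_sq_le_of_distE_le hdistw
      simpa using h1
    have hp1r : p.1 ∈ closedBall (0 : X) r := by
      simp only [Metric.mem_closedBall, dist_zero_right]
      linarith
    have hw1r : w.1 ∈ closedBall (0 : X) r := by
      simp only [Metric.mem_closedBall, dist_zero_right]
      have h1 : ‖w.1‖ ≤ dist w.1 p.1 + ‖p.1‖ := by
        rw [dist_eq_norm]
        calc ‖w.1‖ = ‖(w.1 - p.1) + p.1‖ := by rw [sub_add_cancel]
          _ ≤ ‖w.1 - p.1‖ + ‖p.1‖ := norm_add_le _ _
      have h2 : lam * t ≤ δ₁ := by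
        calc lam * t ≤ 1 * δ₁ := mul_le_mul hlamle ht.2 ht.1 zero_le_one
          _ = δ₁ := one_mul _
      linarith
    have hlip2 : |h w.1 - h p.1| ≤ ε * dist w.1 p.1 := by
      have h1 := hlip w.1 hw1r p.1 hp1r
      rwa [dist_eq_norm]
    refine ⟨?_, ?_, ?_, ?_⟩
    · show g w.1 + (h w.1 : EReal) ≤ ((w.2 + h w.1 : ℝ) : EReal)
      rw [EReal.coe_add]
      exact add_le_add (show g w.1 ≤ (w.2 : EReal) from hepiw) le_rfl
    · show distE (w.1, w.2 + h w.1) p ≤ t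
      rw [distE]
      apply sqrt_le_of_sq ht.1
      have hc : |w.2 + h w.1 - p.2| ≤ |w.2 - (p.2 - h p.1)| + ε * dist w.1 p.1 := by
        have heq : w.2 + h w.1 - p.2 = (w.2 - (p.2 - h p.1)) + (h w.1 - h p.1) := by ring
        rw [heq]
        exact (abs_add_le _ _).trans (by linarith [hlip2])
      set a := dist w.1 p.1 with hadef
      set b := |w.2 - (p.2 - h p.1)| with hbdef
      have ha0 : 0 ≤ a := dist_nonneg
      have hb0 : 0 ≤ b := abs_nonneg _
      have hab' : a ^ 2 + b ^ 2 ≤ (lam * t) ^ 2 := by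
        rw [hbdef, sq_abs]; exact hab
      obtain ⟨hcl, hcr⟩ := abs_le.mp hc
      have hsqc : (w.2 + h w.1 - p.2) ^ 2 ≤ (b + ε * a) ^ 2 := sq_le_sq' hcl hcr
      have step1 : a ^ 2 + (w.2 + h w.1 - p.2) ^ 2 ≤ (1 + ε) ^ 2 * (a ^ 2 + b ^ 2) := by
        nlinarith [mul_nonneg hε.le (sq_nonneg (a - b)), mul_nonneg (mul_nonneg hε.le hε.le) hb0, sq_nonneg b, mul_nonneg hε.le (mul_nonneg hε.le (sq_nonneg b))]
      have step2 : (1 + ε) ^ 2 * (a ^ 2 + b ^ 2) ≤ (1 + ε) ^ 2 * (lam * t) ^ 2 :=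
        mul_le_mul_of_nonneg_left hab' (by positivity)
      have step3 : (1 + ε) ^ 2 * (lam * t) ^ 2 = lam * t ^ 2 := by
        rw [mul_pow, hlam]
        field_simp
      have step4 : lam * t ^ 2 ≤ t ^ 2 := mul_le_of_le_one_left (sq_nonneg t) hlamle
      show a ^ 2 + (w.2 + h w.1 - p.2) ^ 2 ≤ t ^ 2
      linarith
    · show w.2 + h w.1 ≤ p.2 - (σ - ε) * ((1 + ε) ^ 2)⁻¹ * t
      have h1 : h w.1 - h p.1 ≤ ε * dist w.1 p.1 := (le_abs_self _).trans hlip2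
      have h2 : ε * dist w.1 p.1 ≤ ε * (lam * t) := mul_le_mul_of_nonneg_left ha hε.le
      have hring : (σ - ε) * ((1 + ε) ^ 2)⁻¹ * t = σ * (lam * t) - ε * (lam * t) := by
        rw [hlam]; ring
      have hdecw' : w.2 ≤ (p.2 - h p.1) - σ * (lam * t) := hdecw
      linarith
    · show (H (-p.1, p.2 - h (-p.1)) (lam * t)).1 = -w.1
      rw [hhe p.1]
      exact heqw

lemma transfer (g : X → EReal) (h : X → ℝ) (hC : ContDiff ℝ 1 h)
    (hhe : ∀ x, h (-x) = h x) (η : ℝ) (hg0 : g 0 ≤ (η : EReal)) :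
    slopeZ2 g η ≤ slopeZ2 (fun x => g x + (h x : EReal)) (η + h 0) := by
  set F : X → EReal := fun x => g x + (h x : EReal) with hF
  have hF0 : F 0 ≤ ((η + h 0 : ℝ) : EReal) := by
    rw [EReal.coe_add]; exact add_le_add hg0 le_rfl
  have hbddF : BddAbove (slopeZ2Set F (η + h 0)) :=
    ⟨1, fun x hx => slopeZ2Set_le_one hF0 x hx⟩
  have hsF0 : 0 ≤ slopeZ2 F (η + h 0) := slopeZ2_nonneg hF0
  have hsF1 : slopeZ2 F (η + h 0) ≤ 1 := slopeZ2_le_one hF0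
  show sSup (slopeZ2Set g η) ≤ slopeZ2 F (η + h 0)
  refine csSup_le ⟨0, zero_mem_slopeZ2Set g η⟩ fun σ hσ => ?_
  have hσ1 : σ ≤ 1 := slopeZ2Set_le_one hg0 σ hσ
  refine le_of_forall_pos_le_add fun ε' hε' => ?_
  set ε : ℝ := min (ε' / 4) 1 with hεdef
  have hεpos : 0 < ε := lt_min (by linarith) one_pos
  have hε1 : ε ≤ 1 := min_le_right _ _
  have hεε' : ε ≤ ε' / 4 := min_le_left _ _
  by_cases hcase : σ ≤ ε
  · linarith
  · push_neg at hcase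
    have hmem := mem_transfer g h hC hhe η hσ hεpos hε1 hcase.le
    have hle : (σ - ε) * ((1 + ε) ^ 2)⁻¹ ≤ slopeZ2 F (η + h 0) := le_csSup hbddF hmem
    have h2 : σ - ε ≤ slopeZ2 F (η + h 0) * (1 + ε) ^ 2 := by
      have h3 := mul_le_mul_of_nonneg_right hle (by positivity : (0:ℝ) ≤ (1 + ε) ^ 2)
      rwa [mul_assoc, inv_mul_cancel₀ (by positivity), mul_one] at h3
    nlinarith [mul_nonneg (sub_nonneg.2 hsF1) hεpos.le,
      mul_nonneg (sub_nonneg.2 hsF1) (mul_nonneg hεpos.le hεpos.le),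
      mul_nonneg hεpos.le (sub_nonneg.2 hε1)]


end Aux

/-- **Proposition 3.7 (b).** For `f = J + I` with `J`, `I` even, `J` lower semicontinuous with
`J 0 < +∞` and `I` of class `C¹`, for every `η ≥ f 0` one has
`|d_{ℤ₂}G_f|(0,η) = 1 ↔ |d_{ℤ₂}G_J|(0, η - I 0) = 1`. -/
theorem statement2 {X : Type*} [NormedAddCommGroup X] [NormedSpace ℝ X]
    (J : X → EReal) (hJ : LowerSemicontinuous J) (hbot : ∀ x, J x ≠ ⊥) (hJ0 : J 0 ≠ ⊤)
    (I : X → ℝ) (hI : ContDiff ℝ 1 I)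
    (f : X → EReal) (hf : ∀ x, f x = J x + (I x : EReal))
    (hJeven : ∀ x, J (-x) = J x) (hIeven : ∀ x, I (-x) = I x)
    (η : ℝ) (hη : f 0 ≤ (η : EReal)) :
    slopeZ2 f η = 1 ↔ slopeZ2 J (η - I 0) = 1 := by
  have hJ0' : J 0 ≤ ((η - I 0 : ℝ) : EReal) := by
    rw [EReal.coe_sub]
    refine (EReal.le_sub_iff_add_le (Or.inl (EReal.coe_ne_bot _))
      (Or.inl (EReal.coe_ne_top _))).2 ?_
    rw [← hf 0]; exact hη
  have h1 : slopeZ2 J (η - I 0) ≤ slopeZ2 f η := by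
    have h := transfer J I hI hIeven (η - I 0) hJ0'
    have heq1 : (fun x => J x + (I x : EReal)) = f := funext fun x => (hf x).symm
    rw [heq1, sub_add_cancel] at h
    exact h
  have h2 : slopeZ2 f η ≤ slopeZ2 J (η - I 0) := by
    have h := transfer f (fun x => -I x) hI.neg (fun x => by simp [hIeven]) η hη
    have heq2 : (fun x => f x + ((-I x : ℝ) : EReal)) = J := funext fun x => by
      rw [hf x, add_assoc, ← EReal.coe_add]
      simp
    rw [heq2] at h
    rwa [← sub_eq_add_neg] at h
  rw [le_antisymm h2 h1]
end

section
/- Let X be a complete metric space, f : X → ℝ ∪ {+∞} lower semicontinuous, and (u,η) ∈ epi(f) with f(u) < η. Assume that for every ϱ > 0 there exist δ > 0 and a continuous map H : {w ∈ B(u,δ) : f(w) < η + δ} × [0,δ] → X satisfying d(H(w,t), w) ≤ ϱt and f(H(w,t)) ≤ (1−t)f(w) + t(f(u) + ϱ) whenever w ∈ B(u,δ), f(w) < η + δ and t ∈ [0,δ]. Then |dG_f|(u,η) = 1. -/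
open Metric Set Filter
open scoped ENNReal

lemma snd_abs_le_distE {X : Type*} [MetricSpace X] (p q : X × ℝ) :
    |p.2 - q.2| ≤ distE p q := by
  rw [← Real.sqrt_sq_eq_abs]
  exact Real.sqrt_le_sqrt (by nlinarith [sq_nonneg (dist p.1 q.1)])

lemma fst_dist_le_distE {X : Type*} [MetricSpace X] (p q : X × ℝ) :
    dist p.1 q.1 ≤ distE p q := by
  rw [← Real.sqrt_sq (dist_nonneg (x := p.1) (y := q.1))]
  exact Real.sqrt_le_sqrt (by nlinarith [sq_nonneg (p.2 - q.2)])

lemma zero_mem_slopeSet {X : Type*} [MetricSpace X] (f : X → EReal) (u : X) (η : ℝ) :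
    (0:ℝ) ∈ slopeSet f u η := by
  refine ⟨le_refl 0, 1, one_pos, fun p _ => p, continuous_fst.continuousOn, ?_⟩
  intro p hp t ht
  refine ⟨hp.2, ?_, by simp⟩
  have : distE p p = 0 := by simp [distE]
  simpa [this] using ht.1

lemma slopeSet_le_one {X : Type*} [MetricSpace X] {f : X → EReal} {u : X} {η : ℝ}
    (hmem : (u, η) ∈ epiSet f) {σ : ℝ} (hσ : σ ∈ slopeSet f u η) : σ ≤ 1 := by
  by_contra hc
  push_neg at hc
  obtain ⟨hσ0, δ, hδ, H, _, hH⟩ := hσ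
  have hpmem : (u, η) ∈ ballE (u, η) δ ∩ epiSet f := by
    refine ⟨?_, hmem⟩
    show distE (u, η) (u, η) < δ
    simpa [distE] using hδ
  obtain ⟨_, h2, h3⟩ := hH (u, η) hpmem δ ⟨hδ.le, le_refl δ⟩
  have habs := snd_abs_le_distE (H (u, η) δ) (u, η)
  have hneg := neg_le_abs ((H (u, η) δ).2 - (u, η).2)
  simp only at h2 h3 habs hneg
  nlinarith

/-- **Theorem 3.8 (first part).** Criterion ensuring `|dG_f|(u,η) = 1` for a lower
semicontinuous function `f` on a complete metric space at `(u,η) ∈ epi f` with `f u < η`. -/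
theorem statement4 {X : Type*} [MetricSpace X] [CompleteSpace X]
    (f : X → EReal) (hlsc : LowerSemicontinuous f) (hbot : ∀ x, f x ≠ ⊥)
    (u : X) (η : ℝ) (hmem : (u, η) ∈ epiSet f) (hlt : f u < (η : EReal))
    (hyp : ∀ ϱ : ℝ, 0 < ϱ → ∃ δ : ℝ, 0 < δ ∧ ∃ H : X → ℝ → X,
      ContinuousOn (fun q : X × ℝ => H q.1 q.2)
        ({w | w ∈ ball u δ ∧ f w < ((η + δ : ℝ) : EReal)} ×ˢ Icc 0 δ) ∧
      ∀ w, w ∈ ball u δ → f w < ((η + δ : ℝ) : EReal) → ∀ t ∈ Icc (0:ℝ) δ,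
        dist (H w t) w ≤ ϱ * t ∧
        f (H w t) ≤ ((1 - t : ℝ) : EReal) * f w + ((t : ℝ) : EReal) * (f u + (ϱ : EReal))) :
    slopeG f u η = 1 := by
  have hfu_ne_top : f u ≠ ⊤ := ne_top_of_lt hlt
  set fu := (f u).toReal with hfu_def
  have hfu_eq : f u = (fu : EReal) := (EReal.coe_toReal hfu_ne_top (hbot u)).symm
  have hfuη : fu < η := by
    rw [hfu_eq] at hlt; exact_mod_cast hlt
  set A := η - fu with hA_def
  have hA : 0 < A := by simp [hA_def]; linarith
  -- key: membership of explicit σ's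
  have key : ∀ r : ℝ, 0 < r → r ≤ A / 2 →
      (A - 2 * r) / Real.sqrt (r ^ 2 + A ^ 2) ∈ slopeSet f u η := by
    intro r hr hrA
    obtain ⟨δ₀, hδ₀, H, Hcont, Hprop⟩ := hyp r hr
    set s := Real.sqrt (r ^ 2 + A ^ 2) with hs_def
    have hs0 : 0 < s := Real.sqrt_pos.mpr (by positivity)
    have hss : s ^ 2 = r ^ 2 + A ^ 2 := Real.sq_sqrt (by positivity)
    have hsA : A ≤ s := by
      calc A = Real.sqrt (A ^ 2) := (Real.sqrt_sq hA.le).symm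
        _ ≤ s := Real.sqrt_le_sqrt (by nlinarith)
    set δ' := min r (min δ₀ (δ₀ * s)) with hδ'_def
    have hδ'pos : 0 < δ' := lt_min hr (lt_min hδ₀ (by positivity))
    have hδ'r : δ' ≤ r := min_le_left _ _
    have hδ'δ₀ : δ' ≤ δ₀ := le_trans (min_le_right _ _) (min_le_left _ _)
    have hδ's : δ' ≤ δ₀ * s := le_trans (min_le_right _ _) (min_le_right _ _)
    refine ⟨div_nonneg (by linarith) hs0.le, δ', hδ'pos,
      fun p t => (H p.1 (t / s), p.2 - (t / s) * (p.2 - fu - r)), ?_, ?_⟩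
    · -- continuity
      apply ContinuousOn.prodMk
      · have hφ : Continuous fun q : (X × ℝ) × ℝ => (q.1.1, q.2 / s) := by fun_prop
        refine (Hcont.comp hφ.continuousOn ?_)
        rintro ⟨p, t⟩ ⟨⟨hpb, hpe⟩, ht⟩
        have h1 : dist p.1 u < δ' := lt_of_le_of_lt (fst_dist_le_distE p (u, η)) hpb
        have h2 : |p.2 - η| < δ' := lt_of_le_of_lt (snd_abs_le_distE p (u, η)) hpb
        have h2' : -δ' < p.2 - η ∧ p.2 - η < δ' := abs_lt.mp h2
        constructor
        · exact ⟨mem_ball.mpr (lt_of_lt_of_le h1 hδ'δ₀), lt_of_le_of_lt hpe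
            (by exact_mod_cast (by linarith : p.2 < η + δ₀))⟩
        · exact ⟨div_nonneg ht.1 hs0.le, by
            rw [div_le_iff₀ hs0]
            calc t ≤ δ' := ht.2
              _ ≤ δ₀ * s := hδ's⟩
      · exact (Continuous.continuousOn (by fun_prop))
    · -- the three conditions
      intro p hp t ht
      obtain ⟨hpb, hpe⟩ := hp
      have h1 : dist p.1 u < δ' := lt_of_le_of_lt (fst_dist_le_distE p (u, η)) hpb
      have h2 : -δ' < p.2 - η ∧ p.2 - η < δ' :=
        abs_lt.mp (lt_of_le_of_lt ((snd_abs_le_distE p (u, η)) :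
          |p.2 - η| ≤ distE p (u, η)) hpb)
      have hts0 : 0 ≤ t / s := div_nonneg ht.1 hs0.le
      have htsδ₀ : t / s ≤ δ₀ := by
        rw [div_le_iff₀ hs0]; calc t ≤ δ' := ht.2
          _ ≤ δ₀ * s := hδ's
      have hts1 : t / s ≤ 1 := by
        rw [div_le_one hs0]; linarith [ht.2]
      have hflt : f p.1 < ((η + δ₀ : ℝ) : EReal) :=
        lt_of_le_of_lt hpe (by exact_mod_cast (by linarith : p.2 < η + δ₀))
      obtain ⟨hd, hf⟩ := Hprop p.1 (mem_ball.mpr (lt_of_lt_of_le h1 hδ'δ₀)) hflt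
        (t / s) ⟨hts0, htsδ₀⟩
      -- f p.1 is real-valued
      have hpe' : f p.1 ≤ (p.2 : EReal) := hpe
      have hfp_ne_top : f p.1 ≠ ⊤ := ne_top_of_le_ne_top (EReal.coe_ne_top p.2) hpe'
      set w2 := (f p.1).toReal with hw2_def
      have hfp_eq : f p.1 = (w2 : EReal) := (EReal.coe_toReal hfp_ne_top (hbot p.1)).symm
      have hw2 : w2 ≤ p.2 := by rw [hfp_eq] at hpe'; exact_mod_cast hpe'
      -- bounds on p.2 - fu - r
      have hb1 : 0 ≤ p.2 - fu - r := by
        linarith [h2.1, hδ'r, hrA, hA_def]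
      have hb2 : p.2 - fu - r ≤ A := by
        simp only [hA_def]; linarith [h2.2, hδ'r]
      refine ⟨?_, ?_, ?_⟩
      · -- epigraph membership
        show f (H p.1 (t / s)) ≤ ((p.2 - t / s * (p.2 - fu - r) : ℝ) : EReal)
        calc f (H p.1 (t / s)) ≤ ((1 - t / s : ℝ) : EReal) * f p.1 +
              ((t / s : ℝ) : EReal) * (f u + (r : ℝ)) := hf
          _ = (((1 - t / s) * w2 + (t / s) * (fu + r) : ℝ) : EReal) := by
              rw [hfp_eq, hfu_eq]
              norm_cast
          _ ≤ ((p.2 - t / s * (p.2 - fu - r) : ℝ) : EReal) := by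
              apply EReal.coe_le_coe_iff.mpr
              nlinarith
      · -- distance bound
        show distE (H p.1 (t / s), p.2 - t / s * (p.2 - fu - r)) p ≤ t
        have hinner : dist (H p.1 (t / s)) p.1 ^ 2 +
            (p.2 - t / s * (p.2 - fu - r) - p.2) ^ 2 ≤ t ^ 2 := by
          have hdn : (0:ℝ) ≤ dist (H p.1 (t / s)) p.1 := dist_nonneg
          have e1 : dist (H p.1 (t / s)) p.1 ^ 2 ≤ (r * (t / s)) ^ 2 := by nlinarith
          have e2 : (p.2 - fu - r) ^ 2 ≤ A ^ 2 := by nlinarith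
          have e3 : (t / s) ^ 2 * (p.2 - fu - r) ^ 2 ≤ (t / s) ^ 2 * A ^ 2 :=
            mul_le_mul_of_nonneg_left e2 (sq_nonneg (t / s))
          have hteq2 : (t / s) ^ 2 * (r ^ 2 + A ^ 2) = t ^ 2 := by
            rw [← hss]; field_simp
          have e4 : (p.2 - t / s * (p.2 - fu - r) - p.2) ^ 2
              = (t / s) ^ 2 * (p.2 - fu - r) ^ 2 := by ring
          linarith [e1, e3, e4, hteq2]
        calc distE (H p.1 (t / s), p.2 - t / s * (p.2 - fu - r)) p
            = Real.sqrt (dist (H p.1 (t / s)) p.1 ^ 2 +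
              (p.2 - t / s * (p.2 - fu - r) - p.2) ^ 2) := rfl
          _ ≤ Real.sqrt (t ^ 2) := Real.sqrt_le_sqrt hinner
          _ = t := Real.sqrt_sq ht.1
      · -- slope drop
        show p.2 - t / s * (p.2 - fu - r) ≤ p.2 - (A - 2 * r) / s * t
        have : (A - 2 * r) / s * t = (t / s) * (A - 2 * r) := by ring
        rw [this]
        have hge' : A - 2 * r ≤ p.2 - fu - r := by linarith [h2.1, hδ'r, hA_def]
        have := mul_le_mul_of_nonneg_left hge' hts0
        linarith
  -- upper bound
  have hub : ∀ σ ∈ slopeSet f u η, σ ≤ 1 := fun σ hσ => slopeSet_le_one hmem hσ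
  have hbdd : BddAbove (slopeSet f u η) := ⟨1, hub⟩
  have hle : slopeG f u η ≤ 1 :=
    csSup_le ⟨0, zero_mem_slopeSet f u η⟩ hub
  have hge : 1 ≤ slopeG f u η := by
    have hval : (A - 2 * (0:ℝ)) / Real.sqrt ((0:ℝ) ^ 2 + A ^ 2) = 1 := by
      rw [show (0:ℝ) ^ 2 + A ^ 2 = A ^ 2 by ring, Real.sqrt_sq hA.le]
      field_simp
      ring
    have hc : ContinuousAt (fun r : ℝ => (A - 2 * r) / Real.sqrt (r ^ 2 + A ^ 2)) 0 := by
      apply ContinuousAt.div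
      · fun_prop
      · exact (Real.continuous_sqrt.comp (by fun_prop)).continuousAt
      · rw [show (0:ℝ) ^ 2 + A ^ 2 = A ^ 2 by ring, Real.sqrt_sq hA.le]
        exact hA.ne'
    have htend : Tendsto (fun r : ℝ => (A - 2 * r) / Real.sqrt (r ^ 2 + A ^ 2))
        (nhdsWithin 0 (Ioi 0)) (nhds 1) := by
      have h0 : Tendsto (fun r : ℝ => (A - 2 * r) / Real.sqrt (r ^ 2 + A ^ 2))
          (nhdsWithin 0 (Ioi 0))
          (nhds ((A - 2 * 0) / Real.sqrt ((0:ℝ) ^ 2 + A ^ 2))) :=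
        hc.tendsto.mono_left nhdsWithin_le_nhds
      rwa [hval] at h0
    refine le_of_tendsto htend ?_
    filter_upwards [Ioc_mem_nhdsGT (half_pos hA)] with r hr using
      le_csSup hbdd (key r hr.1 hr.2)
  linarith
end
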